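/- Let G be a finite group and H a subgroup of G with H < G. Let K be the join of all atoms of the interval [H,G] (the minimal subgroups strictly containing H). If the bottom interval [H,K] is linearly primitive (i.e., there exists an irreducible complex representation U of K with K_{(U^H)} = H), then the interval [H,G] is linearly primitive (i.e., there exists an irreducible complex representation V of G with G_{(V^H)} = H). -/

import Mathlib

/-- The fixed-point subspace `V^H` of a subgroup `H` under a representation `ρ`. -/
def fixedSubmodule {G : Type*} [Group G] {V : Type*} [AddCommGroup V] [Module ℂ V]
    (ρ : Representation ℂ G V) (H : Subgroup G) : Submodule ℂ V where
  carrier := {v | ∀ h ∈ H, ρ h v = v}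
  add_mem' := by
    intro a b ha hb h hh
    rw [map_add, ha h hh, hb h hh]
  zero_mem' := by intro h hh; simp
  smul_mem' := by
    intro c v hv h hh
    rw [map_smul, hv h hh]

/-- The pointwise stabilizer subgroup `G_(X)` of a subset `X` under a representation `ρ`. -/
def repStab {G : Type*} [Group G] {V : Type*} [AddCommGroup V] [Module ℂ V]
    (ρ : Representation ℂ G V) (X : Set V) : Subgroup G where
  carrier := {g | ∀ x ∈ X, ρ g x = x}
  one_mem' := by intro x hx; simp
  mul_mem' := by
    intro a b ha hb x hx
    rw [map_mul, Module.End.mul_apply, hb x hx, ha x hx]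
  inv_mem' := by
    intro a ha x hx
    have h1 : ρ a x = x := ha x hx
    calc ρ a⁻¹ x = ρ a⁻¹ (ρ a x) := by rw [h1]
      _ = ρ (a⁻¹ * a) x := by rw [map_mul, Module.End.mul_apply]
      _ = x := by simp

/-- A representation is irreducible if the space is nontrivial and the only invariant
subspaces are `⊥` and `⊤`. -/
def IsIrredRep {G : Type*} [Group G] {V : Type*} [AddCommGroup V] [Module ℂ V]
    (ρ : Representation ℂ G V) : Prop :=
  Nontrivial V ∧ ∀ p : Submodule ℂ V, (∀ g : G, ∀ v ∈ p, ρ g v ∈ p) → p = ⊥ ∨ p = ⊤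

/-! Let `U` be the given irreducible representation of `K` and `V` an irreducible
subrepresentation of the representation of `G` coinduced from `U`. Evaluation at `1` is a nonzero,
hence surjective, `K`-map `V → U`; averaging over `H` shows that it maps `V^H` onto `U^H`, so an
element of `K` fixing `V^H` pointwise fixes `U^H` pointwise and lies in `H`. Hence `G_(V^H)` meets
`K` in `H`. A subgroup strictly above `H` would contain an atom of `[H, G]`, which lies in `K`, so
`G_(V^H) = H`. -/

open Representation

section CovBy

variable {α : Type*}

theorem covBy_iff_lt_and_forall_lt_le_eq [PartialOrder α] {a b : α} :
    a ⋖ b ↔ a < b ∧ ∀ c, a < c → c ≤ b → c = b :=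
  ⟨fun h => ⟨h.lt, fun _ hac hcb => hcb.eq_of_not_lt (h.2 hac)⟩,
    fun h => ⟨h.1, fun c hac hcb => hcb.ne (h.2 c hac hcb.le)⟩⟩

theorem eq_of_le_of_inf_sSup_covBy_le [CompleteLattice α] [IsStronglyAtomic α] {a b : α}
    (hab : a ≤ b) (h : b ⊓ sSup {c | a ⋖ c} ≤ a) : b = a := by
  by_contra hne
  obtain ⟨c, hac, hcb⟩ := exists_covBy_le_of_lt (lt_of_le_of_ne hab (Ne.symm hne))
  exact hac.lt.not_ge ((le_inf hcb (le_sSup hac)).trans h)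

end CovBy

namespace Subrepresentation

variable {k G V : Type*} [Semiring k] [Monoid G] [AddCommMonoid V] [Module k V]
  {ρ : Representation k G V}

def subtype (U : Subrepresentation ρ) : IntertwiningMap U.toRepresentation ρ :=
  ⟨U.toSubmodule.subtype, fun _ => rfl⟩

instance [Nontrivial V] : Nontrivial (Subrepresentation ρ) :=
  ⟨⟨⊥, ⊤, fun h => bot_ne_top (congrArg toSubmodule h)⟩⟩

instance [WellFoundedLT (Submodule k V)] : WellFoundedLT (Subrepresentation ρ) :=
  StrictMono.wellFoundedLT (f := toSubmodule) fun _ _ h => h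

end Subrepresentation

namespace Representation

section Monoid

variable {k G K V W : Type*} [Semiring k] [Monoid G] [Monoid K]
  [AddCommMonoid V] [Module k V] [AddCommMonoid W] [Module k W]
  {ρ : Representation k G V} {σ : Representation k G W}

def IntertwiningMap.res (φ : K →* G) (f : IntertwiningMap ρ σ) :
    IntertwiningMap (ρ.comp φ) (σ.comp φ) :=
  ⟨f.toLinearMap, fun x => f.isIntertwining' (φ x)⟩

variable (φ : K →* G) (τ : Representation k K W)

def coindEval : IntertwiningMap ((coind φ τ).comp φ) τ :=
  ⟨LinearMap.proj (R := k) (φ := fun _ : G => W) 1 ∘ₗ (coindV φ τ).subtype, fun x => by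
    ext f
    change f.1 (1 * φ x) = τ x (f.1 1)
    simpa using f.2 x 1⟩

theorem coindEval_comp_subtype_ne_zero {U : Subrepresentation (coind φ τ)} (hU : U ≠ ⊥) :
    (coindEval φ τ).comp (U.subtype.res φ) ≠ 0 := by
  obtain ⟨f, hfU, hf⟩ := U.toSubmodule.exists_mem_ne_zero_of_ne_bot
    fun h => hU (Subrepresentation.ext h)
  obtain ⟨g, hg⟩ : ∃ g, f.1 g ≠ 0 := by
    by_contra! h
    exact hf (Subtype.ext (funext h))
  -- the translate of `f` by `g` lies in `U` and takes the value `f g` at `1`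
  intro h0
  have h1 : f.1 (1 * g) = 0 :=
    DFunLike.congr_fun h0 ⟨coind φ τ g f, U.apply_mem_toSubmodule g hfU⟩
  exact hg (by rwa [one_mul] at h1)

end Monoid

theorem coindEval_surjective {k G V : Type*} [Semiring k] [Group G] [AddCommMonoid V]
    [Module k V] (K : Subgroup G) (τ : Representation k K V) :
    Function.Surjective (coindEval K.subtype τ) := by
  classical
  intro v
  refine ⟨⟨fun g => if hg : g ∈ K then τ ⟨g, hg⟩ v else 0, fun x g => ?_⟩, ?_⟩
  · dsimp only [Subgroup.coe_subtype]
    by_cases hg : g ∈ K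
    · rw [dif_pos hg, dif_pos (mul_mem x.2 hg), ← Module.End.mul_apply, ← map_mul]
      rfl
    · have hxg : (x : G) * g ∉ K := fun h => hg (by simpa using mul_mem (inv_mem x.2) h)
      simp [hg, hxg]
  · change (if h : (1 : G) ∈ K then τ ⟨1, h⟩ v else 0) = v
    rw [dif_pos K.one_mem]
    exact LinearMap.congr_fun (map_one τ) v

section Averaging

variable {k Γ V W : Type*} [CommRing k] [Group Γ] [Fintype Γ] [Invertible (Fintype.card Γ : k)]
  [AddCommGroup V] [Module k V] [AddCommGroup W] [Module k W]
  {ρ : Representation k Γ V} {σ : Representation k Γ W}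

theorem IntertwiningMap.map_averageMap (f : IntertwiningMap ρ σ) (v : V) :
    f (ρ.averageMap v) = σ.averageMap (f v) := by
  simp [GroupAlgebra.average, map_sum, f.isIntertwining]

theorem IntertwiningMap.invariants_le_map_of_surjective (f : IntertwiningMap ρ σ)
    (hf : Function.Surjective f) : σ.invariants ≤ ρ.invariants.map f.toLinearMap := by
  intro w hw
  obtain ⟨v, rfl⟩ := hf w
  exact ⟨ρ.averageMap v, averageMap_invariant ρ v, by
    rw [IntertwiningMap.toLinearMap_apply, f.map_averageMap, averageMap_id σ _ hw]⟩

end Averaging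

end Representation

section Stabilizer

variable {Γ G V W : Type*} [Group Γ] [Group G] [AddCommGroup V] [Module ℂ V]
  [AddCommGroup W] [Module ℂ W]

theorem le_repStab_fixedSubmodule (ρ : Representation ℂ G V) (H : Subgroup G) :
    H ≤ repStab ρ (fixedSubmodule ρ H) :=
  fun h hh _ hv => hv h hh

theorem repStab_antitone (ρ : Representation ℂ G V) : Antitone (repStab ρ) :=
  fun _ _ h _ hg x hx => hg x (h hx)

theorem repStab_comp (ρ : Representation ℂ G V) (φ : Γ →* G) (X : Set V) :
    repStab (ρ.comp φ) X = (repStab ρ X).comap φ :=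
  rfl

theorem Representation.IntertwiningMap.repStab_le_repStab_image {ρ : Representation ℂ G V}
    {σ : Representation ℂ G W} (f : IntertwiningMap ρ σ) (X : Set V) :
    repStab ρ X ≤ repStab σ (f '' X) := by
  rintro g hg _ ⟨x, hx, rfl⟩
  rw [← f.isIntertwining, hg x hx]

theorem fixedSubmodule_eq_invariants (ρ : Representation ℂ G V) (H : Subgroup G) :
    fixedSubmodule ρ H = invariants (ρ.comp H.subtype) := by
  ext v
  simp [fixedSubmodule, mem_invariants]

theorem fixedSubmodule_comp_subtype_subgroupOf (ρ : Representation ℂ G V) {H K : Subgroup G}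
    (hHK : H ≤ K) :
    fixedSubmodule (ρ.comp K.subtype) (H.subgroupOf K) = fixedSubmodule ρ H := by
  ext v
  exact ⟨fun hv h hh => hv ⟨h, hHK hh⟩ hh, fun hv h hh => hv h hh⟩

theorem Representation.IntertwiningMap.fixedSubmodule_le_map_of_surjective
    {ρ : Representation ℂ G V} {σ : Representation ℂ G W} (f : IntertwiningMap ρ σ)
    (hf : Function.Surjective f) (H : Subgroup G) [Finite H] :
    fixedSubmodule σ H ≤ (fixedSubmodule ρ H).map f.toLinearMap := by
  have : Fintype H := Fintype.ofFinite H
  have : Invertible (Fintype.card H : ℂ) := invertibleOfNonzero (by simp)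
  rw [fixedSubmodule_eq_invariants, fixedSubmodule_eq_invariants]
  exact (f.res H.subtype).invariants_le_map_of_surjective hf

theorem repStab_fixedSubmodule_inf_le_map (ρ : Representation ℂ G V) {H K : Subgroup G}
    [Finite H] (hHK : H ≤ K) (σ : Representation ℂ K W)
    (f : IntertwiningMap (ρ.comp K.subtype) σ) (hf : Function.Surjective f) :
    repStab ρ (fixedSubmodule ρ H) ⊓ K ≤
      (repStab σ (fixedSubmodule σ (H.subgroupOf K))).map K.subtype := by
  have : Finite (H.subgroupOf K) :=
    Finite.of_equiv _ (Subgroup.subgroupOfEquivOfLe hHK).symm.toEquiv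
  have hfix : (fixedSubmodule σ (H.subgroupOf K) : Set W) ⊆ f '' fixedSubmodule ρ H := by
    rw [← fixedSubmodule_comp_subtype_subgroupOf ρ hHK]
    exact f.fixedSubmodule_le_map_of_surjective hf _
  calc repStab ρ (fixedSubmodule ρ H) ⊓ K
      = (repStab (ρ.comp K.subtype) (fixedSubmodule ρ H)).map K.subtype := by
        rw [repStab_comp, Subgroup.map_comap_eq, Subgroup.range_subtype, inf_comm]
    _ ≤ _ := Subgroup.map_mono ((f.repStab_le_repStab_image _).trans (repStab_antitone σ hfix))

end Stabilizer

section Irreducible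

variable {G V : Type*} [Group G] [AddCommGroup V] [Module ℂ V] {ρ : Representation ℂ G V}

theorem IsIrredRep.surjective_of_ne_zero {W : Type*} [AddCommMonoid W] [Module ℂ W]
    {σ : Representation ℂ G W} (hρ : IsIrredRep ρ) {f : IntertwiningMap σ ρ} (hf : f ≠ 0) :
    Function.Surjective f := by
  rcases hρ.2 (LinearMap.range f.toLinearMap) (by
      rintro g _ ⟨w, rfl⟩
      exact ⟨σ g w, IntertwiningMap.isIntertwining σ ρ f g w⟩) with h | h
  · exact absurd (IntertwiningMap.ext (LinearMap.range_eq_bot.1 h)) hf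
  · exact LinearMap.range_eq_top.1 h

theorem isIrredRep_toRepresentation_of_isAtom {W : Subrepresentation ρ} (hW : IsAtom W) :
    IsIrredRep W.toRepresentation := by
  refine ⟨Submodule.nontrivial_iff_ne_bot.2 fun h => hW.1 (Subrepresentation.ext h),
    fun p hp => ?_⟩
  have hinj := Submodule.map_injective_of_injective W.toSubmodule.injective_subtype
  let P : Subrepresentation ρ := ⟨p.map W.toSubmodule.subtype, by
    rintro g _ ⟨v, hv, rfl⟩
    exact ⟨_, hp g v hv, rfl⟩⟩
  have hPW : P ≤ W := by
    rintro _ ⟨v, -, rfl⟩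
    exact v.2
  rcases hW.le_iff.1 hPW with h | h
  · left
    apply hinj
    rw [Submodule.map_bot]
    exact congrArg Subrepresentation.toSubmodule h
  · right
    apply hinj
    rw [Submodule.map_subtype_top]
    exact congrArg Subrepresentation.toSubmodule h

end Irreducible

theorem linearly_primitive_of_bottom_linearly_primitive_general {G : Type} [Group G] [Finite G]
    (H : Subgroup G) (K : Subgroup G)
    (hK : K = sSup {A : Subgroup G | H < A ∧ ∀ B : Subgroup G, H < B → B ≤ A → B = A})
    (hbot : ∃ U : FDRep ℂ ↥K, IsIrredRep U.ρ ∧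
      (repStab U.ρ ↑(fixedSubmodule U.ρ (H.subgroupOf K))).map K.subtype = H) :
    ∃ V : FDRep ℂ G, IsIrredRep V.ρ ∧ repStab V.ρ ↑(fixedSubmodule V.ρ H) = H := by
  obtain ⟨U, hU, hstab⟩ := hbot
  have hHK : H ≤ K := hstab ▸ Subgroup.map_subtype_le _
  have hK' : K = sSup {A | H ⋖ A} := by simpa only [← covBy_iff_lt_and_forall_lt_le_eq] using hK
  have : Nontrivial U := hU.1
  have : Nontrivial (coindV K.subtype U.ρ) := (coindEval_surjective K U.ρ).nontrivial
  obtain ⟨W, hW⟩ := IsAtomic.exists_atom (Subrepresentation (coind K.subtype U.ρ))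
  have hsurj : Function.Surjective ((coindEval K.subtype U.ρ).comp (W.subtype.res K.subtype)) :=
    hU.surjective_of_ne_zero (coindEval_comp_subtype_ne_zero _ _ hW.1)
  refine ⟨FDRep.of (V := W.toSubmodule) W.toRepresentation, ?_,
    eq_of_le_of_inf_sSup_covBy_le (le_repStab_fixedSubmodule _ H) ?_⟩
  · exact isIrredRep_toRepresentation_of_isAtom hW
  calc _ ≤ _ := hK' ▸ repStab_fixedSubmodule_inf_le_map _ hHK U.ρ _ hsurj
    _ = H := hstab

/-- If the bottom interval `[H, K]` of `[H, G]` (where `K` is the join of all atoms of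
`[H, G]`) is linearly primitive, then `[H, G]` is linearly primitive. -/
theorem linearly_primitive_of_bottom_linearly_primitive {G : Type} [Group G] [Finite G]
    (H : Subgroup G) (hH : H ≠ ⊤) (K : Subgroup G)
    (hK : K = sSup {A : Subgroup G | H < A ∧ ∀ B : Subgroup G, H < B → B ≤ A → B = A})
    (hbot : ∃ U : FDRep ℂ ↥K, IsIrredRep U.ρ ∧
      (repStab U.ρ ↑(fixedSubmodule U.ρ (H.subgroupOf K))).map K.subtype = H) :
    ∃ V : FDRep ℂ G, IsIrredRep V.ρ ∧ repStab V.ρ ↑(fixedSubmodule V.ρ H) = H :=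
  linearly_primitive_of_bottom_linearly_primitive_general H K hK hbot
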